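/- arXiv:2307.08334 — 2 statements merged into one kernel-verified Lean document; each statement's English description precedes it below -/
import Mathlib

section
/- Let (ℤⁿ, w) be a weighted grid graph and x ∈ ℤⁿ. Then the scalar curvature satisfies R(x) = Σ_{i=1}^{n} ( w(x, x+e_i) − w(x+e_i, x+2e_i) + w(x, x−e_i) − w(x−e_i, x−2e_i) ) − Abs(x). -/
open Filter Topology

noncomputable section

namespace PMT

/-- The `i`-th standard unit vector in `ℤⁿ`. -/
def e (n : ℕ) (i : Fin n) : Fin n → ℤ := fun j => if j = i then 1 else 0

/-- The grid graph on `ℤⁿ`: `x ∼ y` iff `‖x − y‖₁ = 1`. -/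
def grid (n : ℕ) : SimpleGraph (Fin n → ℤ) where
  Adj x y := (∑ i, |x i - y i|) = 1
  symm := by
    constructor
    intro x y h
    beta_reduce at h ⊢
    have h' : ∀ i ∈ Finset.univ, |y i - x i| = |x i - y i| :=
      fun i _ => abs_sub_comm _ _
    rw [Finset.sum_congr rfl h']
    exact h
  loopless := by constructor; intro x h; simp at h

/-- The graph Laplacian `Δf(x) = Σ_{y∼x} w(x,y)(f(y)−f(x))` of an integer-valued function. -/
def lap {V : Type*} (G : SimpleGraph V) (w : V → V → ℝ) (f : V → ℤ) (x : V) : ℝ :=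
  ∑ᶠ y ∈ {y | G.Adj x y}, w x y * ((f y : ℝ) - (f x : ℝ))

/-- `f : V → ℤ` is 1-Lipschitz with respect to the combinatorial graph distance. -/
def Lip1 {V : Type*} (G : SimpleGraph V) (f : V → ℤ) : Prop :=
  ∀ x y, |f x - f y| ≤ (G.dist x y : ℤ)

/-- Ollivier curvature of the pair `(x, y)`:
`κ(x,y) = inf {Δf(x) − Δf(y) | f : V → ℤ, f 1-Lipschitz, f(y) = f(x) + 1}`. -/
def kappa {V : Type*} (G : SimpleGraph V) (w : V → V → ℝ) (x y : V) : ℝ :=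
  sInf {r | ∃ f : V → ℤ, Lip1 G f ∧ f y = f x + 1 ∧ r = lap G w f x - lap G w f y}

/-- Scalar curvature `R(x) = Σ_{y∼x} κ(x,y)`. -/
def scal {V : Type*} (G : SimpleGraph V) (w : V → V → ℝ) (x : V) : ℝ :=
  ∑ᶠ y ∈ {y | G.Adj x y}, kappa G w x y

/-- A weighted grid graph `(ℤⁿ, w)`: symmetric weights, positive on edges. -/
structure GridWeight (n : ℕ) where
  w : (Fin n → ℤ) → (Fin n → ℤ) → ℝ
  symm : ∀ x y, w x y = w y x
  pos : ∀ x y, (grid n).Adj x y → 0 < w x y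

/-- The quantity `Abs(x)` measuring the distortion from the standard grid graph. -/
def Absf (n : ℕ) (w : (Fin n → ℤ) → (Fin n → ℤ) → ℝ) (x : Fin n → ℤ) : ℝ :=
  ∑ i, ∑ j, if i ≠ j then
      (|w x (x + e n i) - w (x + e n j) (x + e n j + e n i)| +
       |w x (x + e n i) - w (x - e n j) (x - e n j + e n i)| +
       |w x (x - e n i) - w (x + e n j) (x + e n j - e n i)| +
       |w x (x - e n i) - w (x - e n j) (x - e n j - e n i)|)
    else 0

/-- The `ℓ^∞` norm `‖x‖_∞` of `x ∈ ℤⁿ`, as a natural number. -/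
def nInf {n : ℕ} (x : Fin n → ℤ) : ℕ := Finset.univ.sup fun i => (x i).natAbs

/-- The cube `Q_r = {y ∈ ℤⁿ : ‖y‖∞ ≤ r}` as a finset. -/
def Qr (n r : ℕ) : Finset (Fin n → ℤ) := Finset.Icc (fun _ => -(r : ℤ)) (fun _ => (r : ℤ))

/-- `Σ_{e ∈ E_r} w(e)`: the sum of weights of edges with exactly one endpoint in `Q_r`
(each such edge is counted once, via its endpoint inside `Q_r`). -/
def ErSum (n : ℕ) (w : (Fin n → ℤ) → (Fin n → ℤ) → ℝ) (r : ℕ) : ℝ :=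
  ∑ x ∈ Qr n r, ∑ i,
    ((if x + e n i ∉ Qr n r then w x (x + e n i) else 0) +
     (if x - e n i ∉ Qr n r then w x (x - e n i) else 0))

/-- `Σ_{τ ∈ Ẽ_r} w(τ)`: the sum of weights of edges joining the sphere `S_{r+1}` to the
sphere `S_{r+2}` (each such edge is counted once, via its endpoint in `S_{r+1}`). -/
def TErSum (n : ℕ) (w : (Fin n → ℤ) → (Fin n → ℤ) → ℝ) (r : ℕ) : ℝ :=
  ∑ x ∈ Qr n (r + 1), if nInf x = r + 1 then
      (∑ i, ((if nInf (x + e n i) = r + 2 then w x (x + e n i) else 0) +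
             (if nInf (x - e n i) = r + 2 then w x (x - e n i) else 0)))
    else 0

/-- The weighted grid graph `(ℤⁿ, w)` is asymptotically flat: there is `p > n` with
`w = 1 + o(1)`, `Abs(x) = O(‖x‖∞^{−p})` and `|R(x)| = O(‖x‖∞^{−p})` as `‖x‖∞ → ∞`. -/
def AsympFlatGrid (n : ℕ) (W : GridWeight n) : Prop :=
  ∃ p : ℝ, (n : ℝ) < p ∧
    (∀ ε : ℝ, 0 < ε → ∃ M : ℕ, ∀ x y, (grid n).Adj x y → M ≤ nInf x → |W.w x y - 1| ≤ ε) ∧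
    (∃ C : ℝ, ∃ M : ℕ, 0 < M ∧ ∀ x, M ≤ nInf x → Absf n W.w x ≤ C * (nInf x : ℝ) ^ (-p)) ∧
    (∃ C : ℝ, ∃ M : ℕ, 0 < M ∧ ∀ x, M ≤ nInf x → |scal (grid n) W.w x| ≤ C * (nInf x : ℝ) ^ (-p))

/-!
For `y = x + ε e_i` (`ε = ±1`), pair every neighbour `x + u` of `x` with the neighbour `y + u`
of `y`. For a 1-Lipschitz `f` with `f y = f x + 1`, `Δf(x) − Δf(y)` is the sum of the transport
terms `w(x,x+u)(f(x+u) − f(x)) − w(y,y+u)(f(y+u) − f(y))`. For `u = ±ε e_i` the Lipschitz bound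
alone gives `2 w(x,y) − w(y,y+ε e_i) − w(x,x−ε e_i)`; for the other `u`, `f(y+u) − f(y)` lies in
`[-1, f(x+u) − f(x)]`, which bounds the term below by `−|w(x,x+u) − w(y,y+u)|`. A function that
is linear in the `i`-th coordinate and a suitably signed step in every other coordinate attains
all these bounds at once, so `κ(x, x ± e_i)` has a closed form; summing over the `2n` neighbours
of `x` and regrouping the absolute values into `Abs(x)` gives the formula.
-/

section GeneralGraph

variable {V : Type*} {G : SimpleGraph V} {w : V → V → ℝ} {f : V → ℤ}

lemma Lip1.abs_sub_le_one (hf : Lip1 G f) {a b : V} (h : G.Adj a b) : |f a - f b| ≤ 1 := by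
  simpa [SimpleGraph.dist_eq_one_iff_adj.2 h] using hf a b

lemma abs_sub_le_length_of_adj (hf : ∀ a b, G.Adj a b → |f a - f b| ≤ 1) {u v : V}
    (p : G.Walk u v) : |f u - f v| ≤ p.length := by
  induction p with
  | nil => simp
  | cons h p ih =>
    rw [SimpleGraph.Walk.length_cons, Nat.cast_succ]
    exact (abs_sub_le _ _ _).trans (by linarith [hf _ _ h])

lemma lip1_of_adj (hG : G.Connected) (hf : ∀ a b, G.Adj a b → |f a - f b| ≤ 1) : Lip1 G f := by
  intro u v
  obtain ⟨p, hp⟩ := hG.exists_walk_length_eq_dist u v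
  exact hp ▸ abs_sub_le_length_of_adj hf p

def transportTerm (w : V → V → ℝ) (f : V → ℤ) (x y x' y' : V) : ℝ :=
  w x x' * ((f x' - f x : ℤ) : ℝ) - w y y' * ((f y' - f y : ℤ) : ℝ)

lemma transportTerm_eq_mul {x y x' y' : V} {s : ℤ} (hx : f x' - f x = s) (hy : f y' - f y = s) :
    transportTerm w f x y x' y' = (w x x' - w y y') * s := by
  rw [transportTerm, hx, hy]
  ring

lemma neg_abs_sub_le_transportTerm (hf : Lip1 G f) {x y x' y' : V} (hxy : f y = f x + 1)
    (hyy' : G.Adj y y') (hx'y' : G.Adj x' y') (hw : 0 ≤ w x x') :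
    -|w x x' - w y y'| ≤ transportTerm w f x y x' y' := by
  have hb : |((f y' - f y : ℤ) : ℝ)| ≤ 1 := by
    exact_mod_cast abs_sub_comm (f y) (f y') ▸ hf.abs_sub_le_one hyy'
  have hab : ((f y' - f y : ℤ) : ℝ) ≤ ((f x' - f x : ℤ) : ℝ) := by
    have := (abs_le.1 (hf.abs_sub_le_one hx'y')).1
    exact_mod_cast (by omega : f y' - f y ≤ f x' - f x)
  have hc : -|w x x' - w y y'| ≤ (w x x' - w y y') * ((f y' - f y : ℤ) : ℝ) := by
    refine neg_le_of_abs_le ?_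
    rw [abs_mul]
    exact mul_le_of_le_one_right (abs_nonneg _) hb
  calc -|w x x' - w y y'|
      ≤ w x x' * (((f x' - f x : ℤ) : ℝ) - ((f y' - f y : ℤ) : ℝ))
        + (w x x' - w y y') * ((f y' - f y : ℤ) : ℝ) :=
        le_add_of_nonneg_of_le (mul_nonneg hw (sub_nonneg.2 hab)) hc
    _ = transportTerm w f x y x' y' := by rw [transportTerm]; ring

lemma le_transportTerm_add_transportTerm (hf : Lip1 G f) {x y x' y' : V} (hxy : f y = f x + 1)
    (hyy' : G.Adj y y') (hxx' : G.Adj x x') (hwy : 0 ≤ w y y') (hwx : 0 ≤ w x x')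
    (hsymm : w y x = w x y) :
    2 * w x y - w y y' - w x x' ≤ transportTerm w f x y y y' + transportTerm w f x y x' x := by
  have hy' : ((f y' - f y : ℤ) : ℝ) ≤ 1 := by
    exact_mod_cast (abs_le.1 (abs_sub_comm (f y) (f y') ▸ hf.abs_sub_le_one hyy')).2
  have hx' : -1 ≤ ((f x' - f x : ℤ) : ℝ) := by
    exact_mod_cast (abs_le.1 (abs_sub_comm (f x) (f x') ▸ hf.abs_sub_le_one hxx')).1
  have hyx : f y - f x = 1 := by omega
  have hxy' : f x - f y = -1 := by omega
  have hwy' := mul_le_mul_of_nonneg_left hy' hwy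
  have hwx' := mul_le_mul_of_nonneg_left hx' hwx
  rw [transportTerm, transportTerm, hyx, hxy', hsymm, Int.cast_neg, Int.cast_one]
  linarith

end GeneralGraph

lemma add_units_smul_add_sub {A M : Type*} [AddCommGroup A] [AddCommMonoid M] (F : A → A → M)
    (x v : A) (ε : ℤˣ) :
    F (x + v) (x + ε • v + v) + F (x - v) (x + ε • v - v) =
      F (x + ε • v) (x + ε • v + ε • v) + F (x - ε • v) x := by
  rcases Int.units_eq_one_or ε with rfl | rfl
  · simp
  · simp [sub_eq_add_neg, add_comm]

def towardSign (a b : ℝ) : ℤ := if a ≤ b then 1 else -1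

lemma sub_mul_towardSign (a b : ℝ) : (a - b) * towardSign a b = -|a - b| := by
  unfold towardSign
  split_ifs with h
  · rw [abs_of_nonpos (sub_nonpos.2 h)]; simp
  · rw [abs_of_pos (sub_pos.2 (not_le.1 h))]; simp

lemma abs_towardSign_le (a b : ℝ) : |towardSign a b| ≤ 1 := by
  unfold towardSign; split_ifs <;> simp

def stepFn (p q t : ℤ) : ℤ := if 0 < t then p else if t < 0 then q else 0

lemma abs_stepFn_sub_le {p q : ℤ} (hp : |p| ≤ 1) (hq : |q| ≤ 1) (s t : ℤ) :
    |stepFn p q s - stepFn p q t| ≤ |s - t| := by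
  rw [abs_le] at hp hq
  unfold stepFn
  rcases abs_cases (s - t) with ⟨h, _⟩ | ⟨h, _⟩ <;> rw [h, abs_le] <;> split_ifs <;> omega

lemma abs_sum_sub_sum_le {ι : Type*} [Fintype ι] (φ : ι → ℤ → ℤ)
    (hφ : ∀ k s t, |φ k s - φ k t| ≤ |s - t|) (a b : ι → ℤ) :
    |∑ k, φ k (a k) - ∑ k, φ k (b k)| ≤ ∑ k, |a k - b k| := by
  rw [← Finset.sum_sub_distrib]
  exact (Finset.abs_sum_le_sum_abs _ _).trans (Finset.sum_le_sum fun k _ => hφ k _ _)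

section Grid

variable {n : ℕ}

lemma grid_adj_add_units_smul (x : Fin n → ℤ) (i : Fin n) (ε : ℤˣ) :
    (grid n).Adj x (x + ε • e n i) := by
  show ∑ k, |x k - (x + ε • e n i) k| = 1
  simpa [e, Units.smul_def, apply_ite (abs : ℤ → ℤ)] using abs_unit_intCast (α := ℤ) ε

lemma grid_adj_sub_units_smul (x : Fin n → ℤ) (i : Fin n) (ε : ℤˣ) :
    (grid n).Adj x (x - ε • e n i) := by
  simpa [sub_eq_add_neg] using grid_adj_add_units_smul x i (-ε)

lemma grid_adj_add_e (x : Fin n → ℤ) (i : Fin n) : (grid n).Adj x (x + e n i) := by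
  simpa using grid_adj_add_units_smul x i 1

lemma grid_adj_sub_e (x : Fin n → ℤ) (i : Fin n) : (grid n).Adj x (x - e n i) := by
  simpa using grid_adj_sub_units_smul x i 1

lemma grid_adj_iff {x z : Fin n → ℤ} :
    (grid n).Adj x z ↔ ∃ i, z = x + e n i ∨ z = x - e n i := by
  refine ⟨fun h => ?_, ?_⟩
  · have h' : ∑ k, |x k - z k| = 1 := h
    have hsum : ∑ k, |(z - x) k| = 1 := by simpa [abs_sub_comm] using h'
    obtain ⟨i, -, hi⟩ := Finset.exists_ne_zero_of_sum_ne_zero (hsum ▸ one_ne_zero)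
    have hsplit := Finset.add_sum_erase Finset.univ (fun k => |(z - x) k|) (Finset.mem_univ i)
    have hrest : ∑ k ∈ Finset.univ.erase i, |(z - x) k| = 0 := by
      have := Finset.sum_nonneg fun k (_ : k ∈ Finset.univ.erase i) => abs_nonneg ((z - x) k)
      have := abs_nonneg ((z - x) i)
      omega
    have hzero : ∀ k ≠ i, (z - x) k = 0 := fun k hk => abs_eq_zero.1 <|
      (Finset.sum_eq_zero_iff_of_nonneg fun k _ => abs_nonneg _).1 hrest k
        (Finset.mem_erase.2 ⟨hk, Finset.mem_univ k⟩)
    have hi1 : |(z - x) i| = 1 := by omega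
    have hz : z = x + (z - x) i • e n i := by
      rw [← sub_eq_iff_eq_add']
      funext k
      by_cases hk : k = i
      · simp [e, hk]
      · simp [e, hk, hzero k hk]
    refine ⟨i, ?_⟩
    rcases (abs_eq zero_le_one).1 hi1 with h1 | h1 <;> rw [h1] at hz <;> simp [hz, sub_eq_add_neg]
  · rintro ⟨i, rfl | rfl⟩
    exacts [grid_adj_add_e x i, grid_adj_sub_e x i]

lemma grid_reachable_add (x v : Fin n → ℤ) : (grid n).Reachable x (x + v) := by
  let S : AddSubgroup (Fin n → ℤ) :=
    { carrier := {v | ∀ x, (grid n).Reachable x (x + v)}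
      zero_mem' := fun x => by simp
      add_mem' := fun ha hb x => by simpa [add_assoc] using (ha x).trans (hb _)
      neg_mem' := fun {a} ha x => by simpa using (ha (x + -a)).symm }
  have he : ∀ i, e n i ∈ S := fun i x => (grid_adj_add_e x i).reachable
  have hv : v = ∑ i, v i • e n i := by
    funext k
    simp [e]
  exact (hv ▸ AddSubgroup.sum_mem S fun i _ => AddSubgroup.zsmul_mem S (he i) (v i) : v ∈ S) x

lemma grid_connected : (grid n).Connected :=
  ⟨fun u v => by simpa using grid_reachable_add u (v - u)⟩

lemma e_injective : Function.Injective (e n) := fun i j h => by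
  simpa [e] using congrFun h i

lemma grid_adj_setOf_eq_range (x : Fin n → ℤ) :
    {z | (grid n).Adj x z} = Set.range (Sum.elim (x + e n ·) (x - e n ·)) := by
  ext z
  simp [grid_adj_iff, eq_comm, exists_or]

lemma finsum_grid_adj {M : Type*} [AddCommMonoid M] (x : Fin n → ℤ) (F : (Fin n → ℤ) → M) :
    ∑ᶠ z ∈ {z | (grid n).Adj x z}, F z = ∑ i, (F (x + e n i) + F (x - e n i)) := by
  have hinj : Function.Injective (Sum.elim (x + e n ·) (x - e n ·)) := by
    refine (add_right_injective x |>.comp e_injective).sumElim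
      (sub_right_injective |>.comp e_injective) fun i j h => ?_
    have := congrFun h i
    by_cases hij : i = j
    · simp [e, hij] at this
      omega
    · simp [e, hij] at this
  rw [grid_adj_setOf_eq_range, finsum_mem_range hinj, finsum_eq_sum_of_fintype,
    Fintype.sum_sum_type, ← Finset.sum_add_distrib]
  rfl

lemma lap_sub_lap_grid (w : (Fin n → ℤ) → (Fin n → ℤ) → ℝ) (f : (Fin n → ℤ) → ℤ)
    (x y : Fin n → ℤ) :
    lap (grid n) w f x - lap (grid n) w f y =
      ∑ j, (transportTerm w f x y (x + e n j) (y + e n j) +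
        transportTerm w f x y (x - e n j) (y - e n j)) := by
  simp only [lap, finsum_grid_adj, transportTerm, ← Finset.sum_sub_distrib, Int.cast_sub]
  exact Finset.sum_congr rfl fun j _ => by ring

lemma lip1_grid_sum_coord (φ : Fin n → ℤ → ℤ) (hφ : ∀ k s t, |φ k s - φ k t| ≤ |s - t|) :
    Lip1 (grid n) fun z => ∑ k, φ k (z k) :=
  lip1_of_adj grid_connected fun a b hab => (abs_sum_sub_sum_le φ hφ a b).trans_eq hab

lemma sum_coord_add_smul_e_sub (φ : Fin n → ℤ → ℤ) (z : Fin n → ℤ) (k : Fin n) (c : ℤ) :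
    ∑ l, φ l ((z + c • e n k) l) - ∑ l, φ l (z l) = φ k (z k + c) - φ k (z k) := by
  rw [← Finset.sum_sub_distrib, Fintype.sum_eq_single k fun l hl => by simp [e, hl]]
  simp [e]

def kappaGrid (w : (Fin n → ℤ) → (Fin n → ℤ) → ℝ) (x : Fin n → ℤ) (i : Fin n) (ε : ℤˣ) : ℝ :=
  2 * w x (x + ε • e n i) - w (x + ε • e n i) (x + ε • e n i + ε • e n i) - w x (x - ε • e n i)
    - ∑ j ∈ Finset.univ.erase i,
      (|w x (x + e n j) - w (x + ε • e n i) (x + ε • e n i + e n j)| +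
        |w x (x - e n j) - w (x + ε • e n i) (x + ε • e n i - e n j)|)

lemma lap_sub_lap_grid_eq (w : (Fin n → ℤ) → (Fin n → ℤ) → ℝ) (f : (Fin n → ℤ) → ℤ)
    (x : Fin n → ℤ) (i : Fin n) (ε : ℤˣ) :
    lap (grid n) w f x - lap (grid n) w f (x + ε • e n i) =
      (transportTerm w f x (x + ε • e n i) (x + ε • e n i) (x + ε • e n i + ε • e n i) +
        transportTerm w f x (x + ε • e n i) (x - ε • e n i) x) +
      ∑ j ∈ Finset.univ.erase i,
        (transportTerm w f x (x + ε • e n i) (x + e n j) (x + ε • e n i + e n j) +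
          transportTerm w f x (x + ε • e n i) (x - e n j) (x + ε • e n i - e n j)) := by
  rw [lap_sub_lap_grid, ← Finset.add_sum_erase _ _ (Finset.mem_univ i),
    add_units_smul_add_sub (transportTerm w f x (x + ε • e n i))]

lemma kappaGrid_le_lap_sub_lap (W : GridWeight n) (x : Fin n → ℤ) (i : Fin n) (ε : ℤˣ)
    {f : (Fin n → ℤ) → ℤ} (hf : Lip1 (grid n) f) (hfy : f (x + ε • e n i) = f x + 1) :
    kappaGrid W.w x i ε ≤ lap (grid n) W.w f x - lap (grid n) W.w f (x + ε • e n i) := by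
  set y := x + ε • e n i with hy
  have hshift (j : Fin n) : y + e n j = x + e n j + ε • e n i ∧
      y - e n j = x - e n j + ε • e n i := by
    rw [hy]; constructor <;> abel
  rw [kappaGrid, lap_sub_lap_grid_eq, sub_eq_add_neg, ← Finset.sum_neg_distrib]
  refine add_le_add (le_transportTerm_add_transportTerm hf hfy
    (grid_adj_add_units_smul y i ε) (grid_adj_sub_units_smul x i ε)
    (W.pos _ _ (grid_adj_add_units_smul y i ε)).le (W.pos _ _ (grid_adj_sub_units_smul x i ε)).le
    (W.symm y x)) (Finset.sum_le_sum fun j _ => ?_)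
  rw [neg_add]
  refine add_le_add (neg_abs_sub_le_transportTerm hf hfy (grid_adj_add_e y j) ?_
    (W.pos _ _ (grid_adj_add_e x j)).le) (neg_abs_sub_le_transportTerm hf hfy
    (grid_adj_sub_e y j) ?_ (W.pos _ _ (grid_adj_sub_e x j)).le)
  · rw [(hshift j).1]; exact grid_adj_add_units_smul _ i ε
  · rw [(hshift j).2]; exact grid_adj_add_units_smul _ i ε

lemma lap_sub_lap_eq_kappaGrid (W : GridWeight n) (x : Fin n → ℤ) (i : Fin n) (ε : ℤˣ)
    {f : (Fin n → ℤ) → ℤ} (hyx : f (x + ε • e n i) - f x = 1)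
    (hyy : f (x + ε • e n i + ε • e n i) - f (x + ε • e n i) = 1)
    (hxx : f (x - ε • e n i) - f x = -1)
    (hplus : ∀ j ≠ i,
      f (x + e n j) - f x =
          towardSign (W.w x (x + e n j)) (W.w (x + ε • e n i) (x + ε • e n i + e n j)) ∧
        f (x + ε • e n i + e n j) - f (x + ε • e n i) =
          towardSign (W.w x (x + e n j)) (W.w (x + ε • e n i) (x + ε • e n i + e n j)))
    (hminus : ∀ j ≠ i,
      f (x - e n j) - f x =
          towardSign (W.w x (x - e n j)) (W.w (x + ε • e n i) (x + ε • e n i - e n j)) ∧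
        f (x + ε • e n i - e n j) - f (x + ε • e n i) =
          towardSign (W.w x (x - e n j)) (W.w (x + ε • e n i) (x + ε • e n i - e n j))) :
    lap (grid n) W.w f x - lap (grid n) W.w f (x + ε • e n i) = kappaGrid W.w x i ε := by
  have hterm (j : Fin n) (hj : j ∈ Finset.univ.erase i) :
      transportTerm W.w f x (x + ε • e n i) (x + e n j) (x + ε • e n i + e n j) +
        transportTerm W.w f x (x + ε • e n i) (x - e n j) (x + ε • e n i - e n j) =
      -(|W.w x (x + e n j) - W.w (x + ε • e n i) (x + ε • e n i + e n j)| +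
        |W.w x (x - e n j) - W.w (x + ε • e n i) (x + ε • e n i - e n j)|) := by
    obtain ⟨hx₁, hy₁⟩ := hplus j (Finset.ne_of_mem_erase hj)
    obtain ⟨hx₂, hy₂⟩ := hminus j (Finset.ne_of_mem_erase hj)
    rw [transportTerm_eq_mul hx₁ hy₁, transportTerm_eq_mul hx₂ hy₂, sub_mul_towardSign,
      sub_mul_towardSign, neg_add]
  rw [lap_sub_lap_grid_eq, transportTerm_eq_mul hyx hyy,
    transportTerm_eq_mul hxx (by omega : f x - f (x + ε • e n i) = -1), W.symm _ x,
    Finset.sum_congr rfl hterm, Finset.sum_neg_distrib, kappaGrid]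
  push_cast
  ring

lemma exists_lip1_lap_sub_lap_eq_kappaGrid (W : GridWeight n) (x : Fin n → ℤ) (i : Fin n)
    (ε : ℤˣ) : ∃ f : (Fin n → ℤ) → ℤ, Lip1 (grid n) f ∧ f (x + ε • e n i) = f x + 1 ∧
      lap (grid n) W.w f x - lap (grid n) W.w f (x + ε • e n i) = kappaGrid W.w x i ε := by
  set y := x + ε • e n i with hy
  have hε : (ε : ℤ) * ε = 1 := by rw [← Units.val_mul, Int.units_mul_self, Units.val_one]
  have hεabs : |(ε : ℤ)| = 1 := by simpa using abs_unit_intCast (α := ℤ) ε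
  set p := fun k => towardSign (W.w x (x + e n k)) (W.w y (y + e n k))
  set q := fun k => towardSign (W.w x (x - e n k)) (W.w y (y - e n k))
  -- `f` is `ε`-linear along the `i`-th axis and, off it, a step whose signs make every
  -- transverse transport term equal to `-|w(x, x ± e_j) - w(y, y ± e_j)|`.
  set φ : Fin n → ℤ → ℤ := fun k t =>
    if k = i then ε * (t - x k) else stepFn (p k) (q k) (t - x k)
  have hφ : ∀ k s t, |φ k s - φ k t| ≤ |s - t| := fun k s t => by
    by_cases hk : k = i
    · simp only [φ, if_pos hk]
      rw [← mul_sub, sub_sub_sub_cancel_right, abs_mul, hεabs, one_mul]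
    · simpa [φ, hk] using
        abs_stepFn_sub_le (abs_towardSign_le _ _) (abs_towardSign_le _ _) (s - x k) (t - x k)
  set f : (Fin n → ℤ) → ℤ := fun z => ∑ k, φ k (z k)
  have hstep (z : Fin n → ℤ) (k : Fin n) (c : ℤ) :
      f (z + c • e n k) - f z = φ k (z k + c) - φ k (z k) :=
    sum_coord_add_smul_e_sub φ z k c
  have hd : ε • e n i = (ε : ℤ) • e n i := Units.smul_def ε _
  have hyx : f y - f x = 1 := by
    rw [hy, hd, hstep]; simp [φ, hε]
  have hyy : f (y + ε • e n i) - f y = 1 := by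
    rw [hd, hstep, hy, hd]; simp [φ, e]; linear_combination 2 * hε
  have hxx : f (x - ε • e n i) - f x = -1 := by
    rw [hd, show x - (ε : ℤ) • e n i = x + (-ε : ℤ) • e n i by simp [sub_eq_add_neg], hstep]
    simp [φ, hε]
  have hcoord (z : Fin n → ℤ) (hz : ∀ j ≠ i, z j = x j) (j : Fin n) (hj : j ≠ i) :
      f (z + e n j) - f z = p j ∧ f (z - e n j) - f z = q j := by
    constructor
    · simpa [φ, hj, stepFn, hz j hj] using hstep z j 1
    · simpa [φ, hj, stepFn, hz j hj, sub_eq_add_neg] using hstep z j (-1)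
  have hyj (j : Fin n) (hj : j ≠ i) : y j = x j := by simp [hy, hd, e, hj]
  refine ⟨f, lip1_grid_sum_coord φ hφ, by omega, lap_sub_lap_eq_kappaGrid W x i ε hyx hyy hxx
    (fun j hj => ⟨(hcoord x (fun _ _ => rfl) j hj).1, (hcoord y hyj j hj).1⟩)
    (fun j hj => ⟨(hcoord x (fun _ _ => rfl) j hj).2, (hcoord y hyj j hj).2⟩)⟩

theorem kappa_grid (W : GridWeight n) (x : Fin n → ℤ) (i : Fin n) (ε : ℤˣ) :
    kappa (grid n) W.w x (x + ε • e n i) = kappaGrid W.w x i ε := by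
  refine IsLeast.csInf_eq ⟨?_, ?_⟩
  · obtain ⟨f, hf, hfy, heq⟩ := exists_lip1_lap_sub_lap_eq_kappaGrid W x i ε
    exact ⟨f, hf, hfy, heq.symm⟩
  · rintro _ ⟨f, hf, hfy, rfl⟩
    exact kappaGrid_le_lap_sub_lap W x i ε hf hfy

lemma kappa_grid_add_e (W : GridWeight n) (x : Fin n → ℤ) (i : Fin n) :
    kappa (grid n) W.w x (x + e n i) =
      2 * W.w x (x + e n i) - W.w (x + e n i) (x + e n i + e n i) - W.w x (x - e n i)
        - ∑ j ∈ Finset.univ.erase i,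
          (|W.w x (x + e n j) - W.w (x + e n i) (x + e n i + e n j)| +
            |W.w x (x - e n j) - W.w (x + e n i) (x + e n i - e n j)|) := by
  simpa [kappaGrid] using kappa_grid W x i 1

lemma kappa_grid_sub_e (W : GridWeight n) (x : Fin n → ℤ) (i : Fin n) :
    kappa (grid n) W.w x (x - e n i) =
      2 * W.w x (x - e n i) - W.w (x - e n i) (x - e n i - e n i) - W.w x (x + e n i)
        - ∑ j ∈ Finset.univ.erase i,
          (|W.w x (x + e n j) - W.w (x - e n i) (x - e n i + e n j)| +
            |W.w x (x - e n j) - W.w (x - e n i) (x - e n i - e n j)|) := by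
  simpa [kappaGrid, sub_eq_add_neg] using kappa_grid W x i (-1)

lemma absf_eq_sum_erase (w : (Fin n → ℤ) → (Fin n → ℤ) → ℝ) (x : Fin n → ℤ) :
    Absf n w x = ∑ i, ∑ j ∈ Finset.univ.erase i,
      ((|w x (x + e n j) - w (x + e n i) (x + e n i + e n j)| +
          |w x (x - e n j) - w (x + e n i) (x + e n i - e n j)|) +
        (|w x (x + e n j) - w (x - e n i) (x - e n i + e n j)| +
          |w x (x - e n j) - w (x - e n i) (x - e n i - e n j)|)) := by
  rw [Absf, Finset.sum_comm]
  refine Finset.sum_congr rfl fun i _ => ?_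
  rw [← Finset.filter_ne', Finset.sum_filter]
  refine Finset.sum_congr rfl fun j _ => ?_
  simp only [ne_comm (a := j)]
  split_ifs <;> ring

end Grid

/-- the scalar curvature formula on a weighted grid graph. -/
theorem scal_grid_formula (n : ℕ) (W : GridWeight n) (x : Fin n → ℤ) :
    scal (grid n) W.w x =
      (∑ i, (W.w x (x + e n i) - W.w (x + e n i) (x + e n i + e n i) +
             W.w x (x - e n i) - W.w (x - e n i) (x - e n i - e n i))) - Absf n W.w x := by
  rw [scal, finsum_grid_adj, absf_eq_sum_erase, ← Finset.sum_sub_distrib]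
  refine Finset.sum_congr rfl fun i _ => ?_
  simp only [kappa_grid_add_e, kappa_grid_sub_e, Finset.sum_add_distrib]
  ring

end PMT
end
end

section
/- Let T_A = Aℤⁿ/qℤⁿ be a discrete weighted torus satisfying the distance condition. If the scalar curvature is non-negative, i.e. R([x]) ≥ 0 for every vertex [x] of T_A, then R([x]) = 0 for every vertex [x]. -/
open Filter Topology

noncomputable section

namespace PMT

/-- The data of a discrete torus `T_A = Aℤⁿ/qℤⁿ`: an integer matrix `A` with
`det A ≠ 0`, and `q = k·|det A|` for some `k ∈ ℤ₊`. We parametrize the lattice `Aℤⁿ` by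
`ℤⁿ` via `z ↦ Az` (so the vertex `x = Az` corresponds to `z`, and `α_i = A e_i`
corresponds to `e_i`). -/
structure TorusData (n : ℕ) where
  A : Matrix (Fin n) (Fin n) ℤ
  hdet : A.det ≠ 0
  k : ℕ
  hk : 0 < k

/-- `q = k·|det A|`. -/
def TorusData.q {n : ℕ} (T : TorusData n) : ℕ := T.k * T.A.det.natAbs

/-- The subgroup `{z ∈ ℤⁿ | Az ∈ qℤⁿ}` of `ℤⁿ`; under `z ↦ Az` it corresponds to the
sublattice `qℤⁿ ⊆ Aℤⁿ`. -/
def TorusData.lat {n : ℕ} (T : TorusData n) : AddSubgroup (Fin n → ℤ) where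
  carrier := {z | ∀ j, ((T.q : ℤ)) ∣ T.A.mulVec z j}
  zero_mem' := by intro j; simp [Matrix.mulVec_zero]
  add_mem' := by
    intro a b ha hb j
    rw [Matrix.mulVec_add]
    exact dvd_add (ha j) (hb j)
  neg_mem' := by
    intro a ha j
    rw [Matrix.mulVec_neg]
    exact dvd_neg.mpr (ha j)

/-- The vertex set of the discrete torus `T_A = Aℤⁿ/qℤⁿ` (in the `z`-parametrization). -/
def TorusV {n : ℕ} (T : TorusData n) : Type := (Fin n → ℤ) ⧸ T.lat

instance {n : ℕ} (T : TorusData n) : AddCommGroup (TorusV T) :=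
  QuotientAddGroup.Quotient.addCommGroup T.lat

/-- The quotient map `Aℤⁿ → T_A` (in the `z`-parametrization, `z` stands for `x = Az`). -/
def tmk {n : ℕ} (T : TorusData n) (z : Fin n → ℤ) : TorusV T := QuotientAddGroup.mk z

/-- The graph structure of the discrete torus: `[x] ∼ [y]` iff `x − y ∈ qℤⁿ ± α_i`
for some `i` (and `[x] ≠ [y]`, so that the graph is simple). -/
def torusG {n : ℕ} (T : TorusData n) : SimpleGraph (TorusV T) where
  Adj a b := a ≠ b ∧ ∃ i : Fin n, b - a = tmk T (e n i) ∨ a - b = tmk T (e n i)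
  symm := by
    constructor
    rintro a b ⟨hne, i, h | h⟩
    · exact ⟨hne.symm, i, Or.inr h⟩
    · exact ⟨hne.symm, i, Or.inl h⟩
  loopless := by constructor; rintro a ⟨hne, -⟩; exact hne rfl

/-- The distance condition: every combinatorial ball of radius 2 in the lattice `Aℤⁿ`
embeds isometrically into the torus, i.e. `d(u,v) = d([u],[v])` for all `u, v ∈ B₂(x)`. -/
def DistCond {n : ℕ} (T : TorusData n) : Prop :=
  ∀ x u v : Fin n → ℤ, (grid n).dist x u ≤ 2 → (grid n).dist x v ≤ 2 →
    (grid n).dist u v = (torusG T).dist (tmk T u) (tmk T v)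


/-!
Every vertex `a` of the torus has the `2n` distinct neighbours `a ± [eᵢ]`, and the distance
condition makes the `i`-th coordinate on `B₂(x)`, extended by McShane's formula, an admissible
test function for the edge `(a, a + [eᵢ])`. Its Laplacians give
`κ(a, a + [eᵢ]) ≤ g(a) - g(a + [eᵢ])` with `g(a) = w(a, a + [eᵢ]) - w(a, a - [eᵢ])`, which
telescopes to `∑ₐ κ(a, a + [eᵢ]) ≤ 0`; by symmetry of `κ` the same holds in the directions
`-[eᵢ]`. Hence `∑ₐ R(a) ≤ 0`, and non-negative numbers with non-positive sum all vanish.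
-/

section Curvature

variable {V : Type*} (G : SimpleGraph V) (w : V → V → ℝ)

lemma lap_neg (f : V → ℤ) (x : V) : lap G w (-f) x = -lap G w f x := by
  simp only [lap, ← finsum_neg_distrib]
  congr! 3
  simp only [Pi.neg_apply, Int.cast_neg]
  ring

lemma kappa_comm (x y : V) : kappa G w x y = kappa G w y x := by
  suffices h : ∀ x y : V,
      {r | ∃ f : V → ℤ, Lip1 G f ∧ f y = f x + 1 ∧ r = lap G w f x - lap G w f y} ⊆
      {r | ∃ f : V → ℤ, Lip1 G f ∧ f x = f y + 1 ∧ r = lap G w f y - lap G w f x} by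
    exact congrArg sInf ((h x y).antisymm (h y x))
  rintro x y r ⟨f, hf, hxy, rfl⟩
  refine ⟨-f, fun a b => ?_, by simp [hxy], by rw [lap_neg, lap_neg]; ring⟩
  rw [Pi.neg_apply, Pi.neg_apply, neg_sub_neg, SimpleGraph.dist_comm]
  exact hf b a

lemma sum_kappa_sub_eq [AddCommGroup V] [Fintype V] (t : V) :
    ∑ a, kappa G w a (a - t) = ∑ a, kappa G w a (a + t) := by
  rw [← Equiv.sum_comp (Equiv.addRight t)]
  simp only [Equiv.coe_addRight, add_sub_cancel_right]
  exact Finset.sum_congr rfl fun a _ => kappa_comm G w _ _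

variable [Finite V]

lemma abs_lap_le {f : V → ℤ} (hf : Lip1 G f) (x : V) :
    |lap G w f x| ≤ ∑ᶠ y ∈ {y | G.Adj x y}, |w x y| := by
  have hs := Set.toFinite {y | G.Adj x y}
  rw [lap, finsum_mem_eq_finite_toFinset_sum _ hs, finsum_mem_eq_finite_toFinset_sum _ hs]
  refine (Finset.abs_sum_le_sum_abs _ _).trans (Finset.sum_le_sum fun y hy => ?_)
  have hxy : G.Adj x y := by simpa using hy
  have hfy : |(f y : ℝ) - f x| ≤ 1 := by
    have := hf y x
    rw [SimpleGraph.dist_comm, SimpleGraph.dist_eq_one_iff_adj.mpr hxy] at this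
    exact_mod_cast this
  rw [abs_mul]
  exact mul_le_of_le_one_right (abs_nonneg _) hfy

lemma kappa_le {x y : V} {f : V → ℤ} (hf : Lip1 G f) (hxy : f y = f x + 1) :
    kappa G w x y ≤ lap G w f x - lap G w f y := by
  refine csInf_le ⟨-(∑ᶠ z ∈ {z | G.Adj x z}, |w x z| + ∑ᶠ z ∈ {z | G.Adj y z}, |w y z|), ?_⟩
    ⟨f, hf, hxy, rfl⟩
  rintro r ⟨g, hg, -, rfl⟩
  have hx := abs_le.mp (abs_lap_le G w hg x)
  have hy := abs_le.mp (abs_lap_le G w hg y)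
  linarith [hx.1, hy.2]

end Curvature

section Extension

variable {V ι : Type*} (G : SimpleGraph V)

def lipExtension (s : Finset ι) (hs : s.Nonempty) (pt : ι → V) (φ : ι → ℤ) (b : V) : ℤ :=
  s.inf' hs fun k => φ k + G.dist (pt k) b

variable {G} {s : Finset ι} (hs : s.Nonempty) (pt : ι → V) (φ : ι → ℤ)

lemma lip1_lipExtension (hG : G.Connected) : Lip1 G (lipExtension G s hs pt φ) := by
  have key : ∀ b c, lipExtension G s hs pt φ b - lipExtension G s hs pt φ c ≤ G.dist b c := by
    intro b c
    obtain ⟨k, hk, hc⟩ := Finset.exists_mem_eq_inf' hs fun k => φ k + (G.dist (pt k) c : ℤ)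
    have hc : lipExtension G s hs pt φ c = φ k + G.dist (pt k) c := hc
    have hb : lipExtension G s hs pt φ b ≤ φ k + G.dist (pt k) b := Finset.inf'_le _ hk
    have htri : (G.dist (pt k) b : ℤ) ≤ G.dist (pt k) c + G.dist c b := by
      exact_mod_cast hG.dist_triangle
    rw [SimpleGraph.dist_comm (u := c)] at htri
    linarith
  intro b c
  rw [abs_sub_le_iff]
  exact ⟨key b c, SimpleGraph.dist_comm (u := b) ▸ key c b⟩

lemma lipExtension_apply (hφ : ∀ k ∈ s, ∀ l ∈ s, φ l - φ k ≤ G.dist (pt k) (pt l))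
    {l : ι} (hl : l ∈ s) : lipExtension G s hs pt φ (pt l) = φ l := by
  refine le_antisymm ?_ (Finset.le_inf' _ _ fun k hk => ?_)
  · have := Finset.inf'_le (fun k => φ k + (G.dist (pt k) (pt l) : ℤ)) hl
    rwa [SimpleGraph.dist_self, Nat.cast_zero, add_zero] at this
  · linarith [hφ k hk l hl]

end Extension

section Grid

variable {n : ℕ}

def dir (n : ℕ) : Fin n × Bool → Fin n → ℤ
  | (i, true) => e n i
  | (i, false) => -e n i

@[simp] lemma dir_true (i : Fin n) : dir n (i, true) = e n i := rfl

@[simp] lemma dir_false (i : Fin n) : dir n (i, false) = -e n i := rfl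

lemma sum_abs_e (i : Fin n) : ∑ k, |e n i k| = 1 := by
  simp [e, apply_ite]

lemma sum_abs_dir (p : Fin n × Bool) : ∑ k, |dir n p k| = 1 := by
  obtain ⟨i, _ | _⟩ := p <;> simp [sum_abs_e]

lemma sum_abs_dir_le_two (p : Fin n × Bool) : ∑ k, |dir n p k| ≤ 2 :=
  (sum_abs_dir p).trans_le one_le_two

lemma dir_apply (p : Fin n × Bool) (k : Fin n) :
    dir n p k = if k = p.1 then (if p.2 then 1 else -1) else 0 := by
  obtain ⟨i, _ | _⟩ := p <;> simp [dir, e, apply_ite]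

lemma dir_injective : Function.Injective (dir n) := by
  rintro ⟨i, s⟩ ⟨j, t⟩ h
  have hi := congrFun h i
  obtain rfl : i = j := by
    by_contra hne
    cases s <;> simp [dir_apply, hne] at hi
  cases s <;> cases t <;> simp [dir_apply] at hi ⊢

lemma eq_of_sum_abs_sub_eq_zero {u v : Fin n → ℤ} (h : ∑ i, |u i - v i| = 0) : u = v := by
  funext i
  have := (Finset.sum_eq_zero_iff_of_nonneg fun i _ => abs_nonneg (u i - v i)).mp h i
    (Finset.mem_univ i)
  rwa [abs_eq_zero, sub_eq_zero] at this

/-- Moving coordinate `i` of `u` one step towards `v` decreases the `ℓ¹` distance by one. -/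
lemma abs_step_sub (u v : Fin n → ℤ) {i : Fin n} (hi : u i ≠ v i) (j : Fin n) :
    |(u - (u i - v i).sign • e n i) j - v j| = |u j - v j| - e n i j := by
  by_cases hj : j = i
  · subst hj
    simp only [Pi.sub_apply, Pi.smul_apply, e, if_true, smul_eq_mul, mul_one]
    rcases lt_or_gt_of_ne (sub_ne_zero.mpr hi) with h | h
    · rw [Int.sign_eq_neg_one_of_neg h, abs_of_neg h, abs_of_nonpos (by omega)]; ring
    · rw [Int.sign_eq_one_of_pos h, abs_of_pos h, abs_of_nonneg (by omega)]; ring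
  · simp [e, hj]

lemma exists_grid_walk_length_eq : ∀ (N : ℕ) (u v : Fin n → ℤ), ∑ i, |u i - v i| = N →
    ∃ p : (grid n).Walk u v, p.length = N
  | 0, u, v, h => by
    obtain rfl := eq_of_sum_abs_sub_eq_zero h
    exact ⟨.nil, rfl⟩
  | N + 1, u, v, h => by
    obtain ⟨i, hi⟩ : ∃ i, u i ≠ v i := by
      by_contra! hc
      simp [hc] at h
      omega
    set u' := u - (u i - v i).sign • e n i
    have hadj : (grid n).Adj u u' := by
      have hstep : ∀ j, |u j - u' j| = |e n i j| := fun j => by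
        simp [u', abs_mul, Int.abs_sign_of_ne_zero (sub_ne_zero.mpr hi)]
      show ∑ j, |u j - u' j| = 1
      simp only [hstep, sum_abs_e]
    have hdist : ∑ j, |u' j - v j| = N := by
      simp only [u', abs_step_sub u v hi, Finset.sum_sub_distrib]
      have : ∑ j, e n i j = 1 := by simp [e]
      omega
    obtain ⟨p, hp⟩ := exists_grid_walk_length_eq N u' v hdist
    exact ⟨.cons hadj p, by simp [hp]⟩

lemma exists_grid_walk (u v : Fin n → ℤ) :
    ∃ p : (grid n).Walk u v, (p.length : ℤ) = ∑ i, |u i - v i| := by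
  have hN := Int.toNat_of_nonneg (Finset.sum_nonneg fun i (_ : i ∈ Finset.univ) =>
    abs_nonneg (u i - v i))
  obtain ⟨p, hp⟩ := exists_grid_walk_length_eq _ u v hN.symm
  exact ⟨p, by rw [hp, hN]⟩

lemma sum_abs_sub_le_length {u v : Fin n → ℤ} (p : (grid n).Walk u v) :
    ∑ i, |u i - v i| ≤ p.length := by
  induction p with
  | nil => simp
  | @cons a b c hab p ih =>
    have htri : ∑ i, |a i - c i| ≤ ∑ i, |a i - b i| + ∑ i, |b i - c i| := by
      rw [← Finset.sum_add_distrib]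
      exact Finset.sum_le_sum fun i _ => abs_sub_le _ _ _
    have hab : ∑ i, |a i - b i| = 1 := hab
    push_cast [SimpleGraph.Walk.length_cons]
    linarith

lemma grid_dist (u v : Fin n → ℤ) : ((grid n).dist u v : ℤ) = ∑ i, |u i - v i| := by
  obtain ⟨p, hp⟩ := exists_grid_walk u v
  obtain ⟨q, hq⟩ := p.reachable.exists_walk_length_eq_dist
  have hle := SimpleGraph.dist_le p
  have hge := sum_abs_sub_le_length q
  omega

lemma grid_connected_s14 : (grid n).Connected where
  preconnected u v := (exists_grid_walk u v).elim fun p _ => p.reachable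
  nonempty := ⟨0⟩

end Grid

section Torus

variable {n : ℕ}

instance (T : TorusData n) : Finite (TorusV T) := by
  have : NeZero T.q := ⟨(Nat.mul_pos T.hk (Int.natAbs_pos.mpr T.hdet)).ne'⟩
  let π : (Fin n → ℤ) →+ (Fin n → ZMod T.q) := (Int.castAddHom (ZMod T.q)).compLeft (Fin n)
  have hker : π.ker ≤ T.lat := fun z hz j =>
    show (T.q : ℤ) ∣ ∑ k, T.A j k * z k from Finset.dvd_sum fun k _ =>
      ((ZMod.intCast_zmod_eq_zero_iff_dvd _ _).mp (congrFun hz k)).mul_left _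
  have := AddSubgroup.finiteIndex_of_le hker
  exact AddSubgroup.finite_quotient_of_finiteIndex

lemma tmk_surjective (T : TorusData n) : Function.Surjective (tmk T) :=
  QuotientAddGroup.mk_surjective

variable {T : TorusData n} (hd : DistCond T)
include hd

lemma dist_tmk_add (x : Fin n → ℤ) {u v : Fin n → ℤ} (hu : ∑ i, |u i| ≤ 2)
    (hv : ∑ i, |v i| ≤ 2) :
    ((torusG T).dist (tmk T (x + u)) (tmk T (x + v)) : ℤ) = ∑ i, |u i - v i| := by
  have hball : ∀ w : Fin n → ℤ, ∑ i, |w i| ≤ 2 → (grid n).dist x (x + w) ≤ 2 := fun w hw => by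
    have := grid_dist x (x + w)
    simp only [Pi.add_apply, sub_add_cancel_left, abs_neg] at this
    omega
  rw [← hd x _ _ (hball u hu) (hball v hv), grid_dist]
  simp only [Pi.add_apply, add_sub_add_left_eq_sub]

lemma torusG_adj_tmk {u v : Fin n → ℤ} (h : (grid n).Adj u v) :
    (torusG T).Adj (tmk T u) (tmk T v) := by
  have h1 : (grid n).dist u v = 1 := SimpleGraph.dist_eq_one_iff_adj.mpr h
  rw [← SimpleGraph.dist_eq_one_iff_adj, ← hd u u v (by simp) (by omega), h1]

lemma torusG_connected : (torusG T).Connected :=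
  grid_connected_s14.map ⟨tmk T, torusG_adj_tmk hd⟩ (tmk_surjective T)

lemma setOf_torusG_adj (a : TorusV T) :
    {b | (torusG T).Adj a b} = Set.range fun p => a + tmk T (dir n p) := by
  ext b
  constructor
  · rintro ⟨-, i, h | h⟩
    · exact ⟨(i, true), show a + tmk T (e n i) = b by rw [← h]; abel⟩
    · exact ⟨(i, false), show a + -tmk T (e n i) = b by rw [← h]; abel⟩
  · rintro ⟨p, rfl⟩
    obtain ⟨x, rfl⟩ := tmk_surjective T a
    refine torusG_adj_tmk hd (show ∑ k, |x k - (x + dir n p) k| = 1 from ?_)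
    simpa using sum_abs_dir p

lemma add_tmk_dir_injective (a : TorusV T) :
    Function.Injective fun p => a + tmk T (dir n p) := by
  intro p p' h
  have hdist := dist_tmk_add hd 0 (sum_abs_dir_le_two p) (sum_abs_dir_le_two p')
  rw [zero_add, zero_add, add_left_cancel h, SimpleGraph.dist_self] at hdist
  exact dir_injective (eq_of_sum_abs_sub_eq_zero hdist.symm)

variable (w : TorusV T → TorusV T → ℝ)

lemma lap_torusG (f : TorusV T → ℤ) (a : TorusV T) :
    lap (torusG T) w f a =
      ∑ p, w a (a + tmk T (dir n p)) * ((f (a + tmk T (dir n p)) : ℝ) - f a) := by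
  rw [lap, setOf_torusG_adj hd, finsum_mem_range (add_tmk_dir_injective hd a),
    finsum_eq_sum_of_fintype]

lemma scal_torusG (a : TorusV T) :
    scal (torusG T) w a = ∑ p, kappa (torusG T) w a (a + tmk T (dir n p)) := by
  rw [scal, setOf_torusG_adj hd, finsum_mem_range (add_tmk_dir_injective hd a),
    finsum_eq_sum_of_fintype]

lemma lap_torusG_of_coord {f : TorusV T → ℤ} {a : TorusV T} {i : Fin n}
    (hf : ∀ p, f (a + tmk T (dir n p)) = f a + dir n p i) :
    lap (torusG T) w f a = w a (a + tmk T (e n i)) - w a (a - tmk T (e n i)) := by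
  have hneg : tmk T (-e n i) = -tmk T (e n i) := rfl
  simp [lap_torusG hd, hf, Fintype.sum_prod_type, dir_apply, hneg, sub_eq_add_neg]

end Torus

section CoordinateTest

variable {n : ℕ}

def ball2 (n : ℕ) : Finset (Fin n → ℤ) := {v ∈ Finset.Icc (-2) 2 | ∑ i, |v i| ≤ 2}

lemma mem_ball2 {v : Fin n → ℤ} : v ∈ ball2 n ↔ ∑ i, |v i| ≤ 2 := by
  refine ⟨fun h => (Finset.mem_filter.mp h).2, fun h => Finset.mem_filter.mpr ⟨?_, h⟩⟩
  have hle : ∀ i, |v i| ≤ 2 := fun i =>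
    (Finset.single_le_sum (fun j _ => abs_nonneg (v j)) (Finset.mem_univ i)).trans h
  exact Finset.mem_Icc.mpr ⟨fun i => (abs_le.mp (hle i)).1, fun i => (abs_le.mp (hle i)).2⟩

def coordTest (T : TorusData n) (x : Fin n → ℤ) (i : Fin n) : TorusV T → ℤ :=
  lipExtension (torusG T) (ball2 n) ⟨0, mem_ball2.mpr (by simp)⟩ (fun v => tmk T (x + v))
    fun v => v i

variable {T : TorusData n} (hd : DistCond T) (x : Fin n → ℤ) (i : Fin n)
include hd

lemma lip1_coordTest : Lip1 (torusG T) (coordTest T x i) :=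
  lip1_lipExtension _ _ _ (torusG_connected hd)

lemma coordTest_tmk_add {v : Fin n → ℤ} (hv : ∑ k, |v k| ≤ 2) :
    coordTest T x i (tmk T (x + v)) = v i := by
  refine lipExtension_apply _ _ _ (fun u hu v hv => ?_) (mem_ball2.mpr hv)
  rw [dist_tmk_add hd x (mem_ball2.mp hu) (mem_ball2.mp hv)]
  calc v i - u i ≤ |u i - v i| := by rw [abs_sub_comm]; exact le_abs_self _
    _ ≤ ∑ k, |u k - v k| := Finset.single_le_sum (fun k _ => abs_nonneg (u k - v k))
      (Finset.mem_univ i)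

variable (w : TorusV T → TorusV T → ℝ)

/-- The coordinate test function is affine on the neighbourhoods of both endpoints of the edge,
so its Laplacians there only see the two edges in direction `±i`. -/
lemma kappa_torusG_le (a : TorusV T) :
    kappa (torusG T) w a (a + tmk T (e n i)) ≤
      (w a (a + tmk T (e n i)) - w a (a - tmk T (e n i))) -
      (w (a + tmk T (e n i)) (a + tmk T (e n i) + tmk T (e n i)) -
        w (a + tmk T (e n i)) (a + tmk T (e n i) - tmk T (e n i))) := by
  obtain ⟨x, rfl⟩ := tmk_surjective T a
  have hx : coordTest T x i (tmk T x) = 0 := by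
    simpa using coordTest_tmk_add hd x i (v := 0) (by simp)
  have hxe : coordTest T x i (tmk T (x + e n i)) = 1 := by
    simpa [e] using coordTest_tmk_add hd x i (v := e n i) ((sum_abs_e i).trans_le one_le_two)
  have hx_nbr (p : Fin n × Bool) :
      coordTest T x i (tmk T x + tmk T (dir n p)) = coordTest T x i (tmk T x) + dir n p i := by
    rw [hx, zero_add]
    exact coordTest_tmk_add hd x i (sum_abs_dir_le_two p)
  have hxe_nbr (p : Fin n × Bool) :
      coordTest T x i (tmk T (x + e n i) + tmk T (dir n p)) =
        coordTest T x i (tmk T (x + e n i)) + dir n p i := by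
    have hsum : ∑ k, |(e n i + dir n p) k| ≤ 2 := by
      calc ∑ k, |(e n i + dir n p) k| ≤ ∑ k, (|e n i k| + |dir n p k|) :=
            Finset.sum_le_sum fun k _ => abs_add_le _ _
        _ = 2 := by rw [Finset.sum_add_distrib, sum_abs_e, sum_abs_dir]; rfl
    have h := coordTest_tmk_add hd x i hsum
    rw [← add_assoc, Pi.add_apply, show e n i i = 1 by simp [e]] at h
    rw [hxe]
    exact h
  calc kappa (torusG T) w (tmk T x) (tmk T x + tmk T (e n i))
      ≤ lap (torusG T) w (coordTest T x i) (tmk T x) -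
          lap (torusG T) w (coordTest T x i) (tmk T (x + e n i)) :=
        kappa_le _ _ (lip1_coordTest hd x i) (by rw [hx, zero_add]; exact hxe)
    _ = _ := by
      rw [lap_torusG_of_coord hd w hx_nbr, lap_torusG_of_coord hd w hxe_nbr]
      rfl

end CoordinateTest

section Flatness

variable {n : ℕ} {T : TorusData n} (hd : DistCond T) (w : TorusV T → TorusV T → ℝ)
  [Fintype (TorusV T)]
include hd

lemma sum_kappa_add_nonpos (i : Fin n) :
    ∑ a, kappa (torusG T) w a (a + tmk T (e n i)) ≤ 0 := by
  set t := tmk T (e n i)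
  let g : TorusV T → ℝ := fun a => w a (a + t) - w a (a - t)
  calc ∑ a, kappa (torusG T) w a (a + t) ≤ ∑ a, (g a - g (a + t)) :=
        Finset.sum_le_sum fun a _ => kappa_torusG_le hd i w a
    _ = 0 := by
      rw [Finset.sum_sub_distrib, Fintype.sum_equiv (Equiv.addRight t) (fun a => g (a + t)) g
        fun _ => rfl, sub_self]

lemma sum_scal_nonpos : ∑ a, scal (torusG T) w a ≤ 0 := by
  simp only [scal_torusG hd]
  rw [Finset.sum_comm]
  refine Finset.sum_nonpos fun ⟨i, s⟩ _ => ?_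
  cases s
  · have hneg (a : TorusV T) : a + tmk T (dir n (i, false)) = a - tmk T (e n i) :=
      (sub_eq_add_neg a (tmk T (e n i))).symm
    simp only [hneg, sum_kappa_sub_eq]
    exact sum_kappa_add_nonpos hd w i
  · exact sum_kappa_add_nonpos hd w i

end Flatness

theorem torus_scalar_flat_general (n : ℕ) (T : TorusData n)
    (wT : TorusV T → TorusV T → ℝ)
    (hdist : DistCond T)
    (hR : ∀ a : TorusV T, 0 ≤ scal (torusG T) wT a) :
    ∀ a : TorusV T, scal (torusG T) wT a = 0 := by
  have := Fintype.ofFinite (TorusV T)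
  have htotal : ∑ a, scal (torusG T) wT a = 0 :=
    le_antisymm (sum_scal_nonpos hdist wT) (Finset.sum_nonneg fun a _ => hR a)
  exact fun a => (Finset.sum_eq_zero_iff_of_nonneg fun b _ => hR b).mp htotal a (Finset.mem_univ a)

/-- a discrete weighted torus satisfying the distance condition with
non-negative scalar curvature is scalar-flat. -/
theorem torus_scalar_flat (n : ℕ) (T : TorusData n)
    (wT : TorusV T → TorusV T → ℝ)
    (hsymm : ∀ a b, wT a b = wT b a)
    (hpos : ∀ a b, (torusG T).Adj a b → 0 < wT a b)
    (hdist : DistCond T)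
    (hR : ∀ a : TorusV T, 0 ≤ scal (torusG T) wT a) :
    ∀ a : TorusV T, scal (torusG T) wT a = 0 :=
  torus_scalar_flat_general n T wT hdist hR

end PMT
end
end
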